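/- Let G be the free metabelian group of rank n with standard generators x₁,…,xₙ. Then every element g ∈ G can be written as a product g = x₁^{γ₁} ⋯ xₙ^{γₙ} · u, where γ₁,…,γₙ are integers and u is an element of the subgroup of G generated by the set {w⁻¹·⁅xᵢ,xⱼ⁆·w : 1 ≤ j < i ≤ n, w an element of the subgroup of G generated by x₁,…,xᵢ}. -/

import Mathlib

/-- The commutator ⁅a,b⁆ = a⁻¹b⁻¹ab (paper convention). -/
def pcomm {G : Type*} [Group G] (a b : G) : G := a⁻¹ * b⁻¹ * a * b

instance (n : ℕ) : (derivedSeries (FreeGroup (Fin n)) 2).Normal :=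
  derivedSeries_normal _ _

/-- The free metabelian group of rank n: the quotient of the free group on n
generators by its second derived subgroup. -/
def freeMetabelian (n : ℕ) :=
  FreeGroup (Fin n) ⧸ derivedSeries (FreeGroup (Fin n)) 2

instance (n : ℕ) : Group (freeMetabelian n) :=
  inferInstanceAs (Group (FreeGroup (Fin n) ⧸ derivedSeries (FreeGroup (Fin n)) 2))

/-- The images of the standard generators of the free group in the free
metabelian group. -/
def xgen (n : ℕ) (i : Fin n) : freeMetabelian n :=
  QuotientGroup.mk (FreeGroup.of i)

/-!
Let `N` be the subgroup generated by the conjugates `w⁻¹ ⁅xᵢ, xⱼ⁆ w` with `j < i` and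
`w ∈ ⟨x₁, …, xᵢ⟩`. Once `N` is normal, `G / N` is generated by the commuting images of
the `xᵢ`, so `G' ≤ N` and the claim follows from the corresponding statement in `G / G'`.

Normality only needs conjugation by `z = xₖ^{±1}`. For `k ≤ i` it just extends `w`.
For `k > i`, since `G'` is abelian, conjugating an element of `G'` by `w z` is the same as
conjugating by `z w`, and a commutator identity rewrites `z⁻¹ ⁅xᵢ, xⱼ⁆ z` as a product of
`⁅xᵢ, xⱼ⁆` and conjugates of `⁅xₖ, xᵢ⁆^{±1}`, `⁅xₖ, xⱼ⁆^{±1}` by elements of `⟨x₁, …, xₖ⟩`.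
-/

open scoped commutatorElement

section Metabelian

variable {G : Type*} [Group G]

theorem pcomm_eq_commutatorElement (a b : G) : pcomm a b = ⁅a⁻¹, b⁻¹⁆ := by
  rw [pcomm, commutatorElement_def, inv_inv, inv_inv]

theorem pcomm_mem_commutator (a b : G) : pcomm a b ∈ commutator G := by
  rw [pcomm_eq_commutatorElement]
  exact Subgroup.commutator_mem_commutator (Subgroup.mem_top _) (Subgroup.mem_top _)

theorem map_pcomm {H : Type*} [Group H] (f : G →* H) (a b : G) :
    f (pcomm a b) = pcomm (f a) (f b) := by
  simp only [pcomm, map_mul, map_inv]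

theorem pcomm_eq_one_iff {a b : G} : pcomm a b = 1 ↔ Commute a b := by
  rw [pcomm_eq_commutatorElement, commutatorElement_eq_one_iff_commute, Commute.inv_inv_iff]

theorem commute_of_mem_commutator (hG : derivedSeries G 2 = ⊥) {c d : G}
    (hc : c ∈ commutator G) (hd : d ∈ commutator G) : Commute c d := by
  rw [derivedSeries_succ, derivedSeries_one, Subgroup.commutator_eq_bot_iff_le_centralizer] at hG
  exact Subgroup.mem_centralizer_iff.mp (hG hd) c hc

theorem conj_mul_comm_of_mem_commutator (hG : derivedSeries G 2 = ⊥) {c : G}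
    (hc : c ∈ commutator G) (u v : G) :
    (u * v)⁻¹ * c * (u * v) = (v * u)⁻¹ * c * (v * u) := by
  have hconj : (v * u)⁻¹ * c * (v * u) ∈ commutator G := by
    have hnormal : (commutator G).Normal := Subgroup.commutator_normal ⊤ ⊤
    simpa using hnormal.conj_mem c hc (v * u)⁻¹
  have hcomm := commute_of_mem_commutator hG hconj (pcomm_mem_commutator u v)
  calc (u * v)⁻¹ * c * (u * v)
      = (pcomm u v)⁻¹ * ((v * u)⁻¹ * c * (v * u)) * pcomm u v := by rw [pcomm]; group
    _ = (v * u)⁻¹ * c * (v * u) := by rw [mul_assoc, hcomm.eq, inv_mul_cancel_left]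

theorem conj_conj_pcomm_eq (a b g w : G) :
    w⁻¹ * (g⁻¹ * pcomm b a * g) * w =
      (w⁻¹ * pcomm b g * w)⁻¹ * ((b * w)⁻¹ * pcomm a g * (b * w))⁻¹ * (w⁻¹ * pcomm b a * w) *
        ((a * w)⁻¹ * pcomm b g * (a * w)) * (w⁻¹ * pcomm a g * w) := by
  simp only [pcomm]; group

theorem commutator_le_of_pcomm_mem {ι : Type*} {x : ι → G}
    (hx : Subgroup.closure (Set.range x) = ⊤) {N : Subgroup G} [N.Normal]
    (hN : ∀ i j, pcomm (x i) (x j) ∈ N) : commutator G ≤ N := by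
  set π := QuotientGroup.mk' N
  have hgen : Subgroup.closure (Set.range (π ∘ x)) = ⊤ := by
    rw [Set.range_comp, ← MonoidHom.map_closure, hx,
      Subgroup.map_top_of_surjective _ (QuotientGroup.mk'_surjective N)]
  have hcomm : Set.range (π ∘ x) ⊆ Set.centralizer (Set.range (π ∘ x)) := by
    rintro _ ⟨i, rfl⟩ _ ⟨j, rfl⟩
    have h : π (pcomm (x j) (x i)) = 1 := by
      rw [← MonoidHom.mem_ker, QuotientGroup.ker_mk']
      exact hN j i
    rw [map_pcomm] at h
    exact pcomm_eq_one_iff.mp h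
  have habel : commutator (G ⧸ N) = ⊥ := by
    rw [commutator, Subgroup.commutator_eq_bot_iff_le_centralizer, ← hgen,
      Subgroup.centralizer_closure]
    exact (Subgroup.closure_le _).mpr hcomm
  rw [← QuotientGroup.ker_mk' N, ← Subgroup.map_eq_bot_iff, commutator, Subgroup.map_commutator,
    Subgroup.map_top_of_surjective _ (QuotientGroup.mk'_surjective N)]
  exact habel

theorem exists_eq_list_prod_zpow_mul_mem_commutator {n : ℕ} {x : Fin n → G}
    (hx : Subgroup.closure (Set.range x) = ⊤) (g : G) :
    ∃ (γ : Fin n → ℤ) (u : G), u ∈ commutator G ∧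
      g = ((List.finRange n).map fun i => x i ^ γ i).prod * u := by
  have hgen : Abelianization.of g ∈ Subgroup.closure (Set.range (Abelianization.of ∘ x)) := by
    rw [Set.range_comp, ← MonoidHom.map_closure, hx,
      Subgroup.map_top_of_surjective _ QuotientGroup.mk_surjective]
    exact Subgroup.mem_top _
  obtain ⟨γ, hγ⟩ := Subgroup.mem_closure_range_iff_of_fintype.mp hgen
  set P := ((List.finRange n).map fun i => x i ^ γ i).prod
  refine ⟨γ, P⁻¹ * g, ?_, (mul_inv_cancel_left P g).symm⟩
  rw [← Abelianization.ker_of, MonoidHom.mem_ker, map_mul, map_inv, hγ, Fin.prod_univ_def,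
    map_list_prod, List.map_map]
  simp [Function.comp_def]

end Metabelian

section OrderedGenerators

variable {G : Type*} [Group G] {ι : Type*} [LinearOrder ι] (x : ι → G)

def lowerSubgroup (i : ι) : Subgroup G := Subgroup.closure (x '' {k | k ≤ i})

def conjCommutatorSet : Set G :=
  {a | ∃ i j, j < i ∧ ∃ w ∈ lowerSubgroup x i, a = w⁻¹ * pcomm (x i) (x j) * w}

def conjCommutatorSubgroup : Subgroup G := Subgroup.closure (conjCommutatorSet x)

variable {x}

theorem mem_lowerSubgroup {i k : ι} (hki : k ≤ i) : x k ∈ lowerSubgroup x i :=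
  Subgroup.subset_closure ⟨k, hki, rfl⟩

theorem lowerSubgroup_mono {i k : ι} (hik : i ≤ k) : lowerSubgroup x i ≤ lowerSubgroup x k :=
  Subgroup.closure_mono (Set.image_mono fun _ hm => le_trans hm hik)

theorem conj_pcomm_mem_conjCommutatorSubgroup {i j : ι} (hji : j < i) {w : G}
    (hw : w ∈ lowerSubgroup x i) : w⁻¹ * pcomm (x i) (x j) * w ∈ conjCommutatorSubgroup x :=
  Subgroup.subset_closure ⟨i, j, hji, w, hw, rfl⟩

theorem conj_pcomm_gen_mem_conjCommutatorSubgroup {k m : ι} (hmk : m < k) {z : G}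
    (hz : z = x k ∨ z = (x k)⁻¹) {v : G} (hv : v ∈ lowerSubgroup x k) :
    v⁻¹ * pcomm (x m) z * v ∈ conjCommutatorSubgroup x := by
  rcases hz with rfl | rfl
  · have h : v⁻¹ * pcomm (x m) (x k) * v = (v⁻¹ * pcomm (x k) (x m) * v)⁻¹ := by
      simp only [pcomm]; group
    rw [h]
    exact inv_mem (conj_pcomm_mem_conjCommutatorSubgroup hmk hv)
  · have h : v⁻¹ * pcomm (x m) (x k)⁻¹ * v
        = ((x k)⁻¹ * v)⁻¹ * pcomm (x k) (x m) * ((x k)⁻¹ * v) := by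
      simp only [pcomm]; group
    rw [h]
    exact conj_pcomm_mem_conjCommutatorSubgroup hmk
      (mul_mem (inv_mem (mem_lowerSubgroup le_rfl)) hv)

theorem conj_mem_conjCommutatorSubgroup_of_mem_conjCommutatorSet (hG : derivedSeries G 2 = ⊥)
    {k : ι} {z : G} (hz : z = x k ∨ z = (x k)⁻¹) {s : G} (hs : s ∈ conjCommutatorSet x) :
    z⁻¹ * s * z ∈ conjCommutatorSubgroup x := by
  obtain ⟨i, j, hji, w, hw, rfl⟩ := hs
  have hconj : z⁻¹ * (w⁻¹ * pcomm (x i) (x j) * w) * z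
      = (w * z)⁻¹ * pcomm (x i) (x j) * (w * z) := by group
  rw [hconj]
  rcases le_or_gt k i with hki | hik
  · have hz' : z ∈ lowerSubgroup x i := by
      rcases hz with rfl | rfl
      exacts [mem_lowerSubgroup hki, inv_mem (mem_lowerSubgroup hki)]
    exact conj_pcomm_mem_conjCommutatorSubgroup hji (mul_mem hw hz')
  · have hjk : j < k := hji.trans hik
    have hwk : w ∈ lowerSubgroup x k := lowerSubgroup_mono hik.le hw
    have hswap : (z * w)⁻¹ * pcomm (x i) (x j) * (z * w)
        = w⁻¹ * (z⁻¹ * pcomm (x i) (x j) * z) * w := by group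
    rw [conj_mul_comm_of_mem_commutator hG (pcomm_mem_commutator _ _), hswap,
      conj_conj_pcomm_eq (x j) (x i) z w]
    refine mul_mem (mul_mem (mul_mem (mul_mem (inv_mem ?_) (inv_mem ?_)) ?_) ?_) ?_
    exacts [conj_pcomm_gen_mem_conjCommutatorSubgroup hik hz hwk,
      conj_pcomm_gen_mem_conjCommutatorSubgroup hjk hz (mul_mem (mem_lowerSubgroup hik.le) hwk),
      conj_pcomm_mem_conjCommutatorSubgroup hji hw,
      conj_pcomm_gen_mem_conjCommutatorSubgroup hik hz (mul_mem (mem_lowerSubgroup hjk.le) hwk),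
      conj_pcomm_gen_mem_conjCommutatorSubgroup hjk hz hwk]

theorem conj_mem_conjCommutatorSubgroup (hG : derivedSeries G 2 = ⊥) {k : ι} {z : G}
    (hz : z = x k ∨ z = (x k)⁻¹) {h : G} (hh : h ∈ conjCommutatorSubgroup x) :
    z⁻¹ * h * z ∈ conjCommutatorSubgroup x := by
  have hle : conjCommutatorSubgroup x ≤
      (conjCommutatorSubgroup x).comap (MulAut.conj z⁻¹).toMonoidHom :=
    (Subgroup.closure_le _).mpr fun s hs => by
      simpa using conj_mem_conjCommutatorSubgroup_of_mem_conjCommutatorSet hG hz hs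
  simpa using hle hh

theorem conjCommutatorSubgroup_normal (hG : derivedSeries G 2 = ⊥)
    (hx : Subgroup.closure (Set.range x) = ⊤) : (conjCommutatorSubgroup x).Normal := by
  rw [← Subgroup.normalizer_eq_top_iff, eq_top_iff, ← hx, Subgroup.closure_le]
  rintro _ ⟨k, rfl⟩ h
  constructor
  · intro hh
    simpa using conj_mem_conjCommutatorSubgroup (k := k) hG (Or.inr rfl) hh
  · intro hh
    simpa [mul_assoc] using conj_mem_conjCommutatorSubgroup (k := k) hG (Or.inl rfl) hh

theorem pcomm_mem_conjCommutatorSubgroup (i j : ι) :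
    pcomm (x i) (x j) ∈ conjCommutatorSubgroup x := by
  rcases lt_trichotomy j i with hji | rfl | hij
  · simpa using conj_pcomm_mem_conjCommutatorSubgroup hji (one_mem (lowerSubgroup x i))
  · simp [pcomm]
  · have h : pcomm (x i) (x j) = (pcomm (x j) (x i))⁻¹ := by simp only [pcomm]; group
    rw [h]
    simpa using
      inv_mem (conj_pcomm_mem_conjCommutatorSubgroup hij (one_mem (lowerSubgroup x j)))

theorem commutator_le_conjCommutatorSubgroup (hG : derivedSeries G 2 = ⊥)
    (hx : Subgroup.closure (Set.range x) = ⊤) : commutator G ≤ conjCommutatorSubgroup x :=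
  have := conjCommutatorSubgroup_normal hG hx
  commutator_le_of_pcomm_mem hx pcomm_mem_conjCommutatorSubgroup

end OrderedGenerators

def freeMetabelian.mk (n : ℕ) : FreeGroup (Fin n) →* freeMetabelian n :=
  QuotientGroup.mk' (derivedSeries (FreeGroup (Fin n)) 2)

theorem freeMetabelian.mk_surjective (n : ℕ) : Function.Surjective (freeMetabelian.mk n) :=
  QuotientGroup.mk'_surjective _

theorem derivedSeries_freeMetabelian_two (n : ℕ) : derivedSeries (freeMetabelian n) 2 = ⊥ := by
  rw [← map_derivedSeries_eq (freeMetabelian.mk_surjective n)]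
  exact QuotientGroup.map_mk'_self _

theorem closure_range_xgen (n : ℕ) : Subgroup.closure (Set.range (xgen n)) = ⊤ := by
  rw [show xgen n = freeMetabelian.mk n ∘ FreeGroup.of from rfl, Set.range_comp,
    ← MonoidHom.map_closure, FreeGroup.closure_range_of,
    Subgroup.map_top_of_surjective _ (freeMetabelian.mk_surjective n)]

theorem stmt13 (n : ℕ) (g : freeMetabelian n) :
    ∃ (γ : Fin n → ℤ) (u : freeMetabelian n),
      u ∈ Subgroup.closure {a : freeMetabelian n |
        ∃ i j : Fin n, j < i ∧
          ∃ w ∈ Subgroup.closure (xgen n '' {k : Fin n | k ≤ i}),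
            a = w⁻¹ * pcomm (xgen n i) (xgen n j) * w} ∧
      g = ((List.finRange n).map fun i => xgen n i ^ γ i).prod * u := by
  obtain ⟨γ, u, hu, rfl⟩ := exists_eq_list_prod_zpow_mul_mem_commutator (closure_range_xgen n) g
  exact ⟨γ, u, commutator_le_conjCommutatorSubgroup (derivedSeries_freeMetabelian_two n)
    (closure_range_xgen n) hu, rfl⟩
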